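/- arXiv:2401.15530 — 4 statements merged into one kernel-verified Lean document; each statement's English description precedes it below -/
import Mathlib

section
/- For all T ≥ 1, all ε ≥ 0, and every random variable θ̃ : Ω → Θ̃ (Θ̃ a nonempty finite type) satisfying the compression constraints I[H_T ; θ̃ | θ] = 0 and I[H_T ; θ | θ̃] ≤ εT, the estimation error satisfies I[H_T ; θ] ≤ I[θ ; θ̃] + εT. (Paper: upper bound of Theorem 'rate-distortion estimation error bound' for sequential learning, with the infimum over compressions unfolded into a universally quantified statement.) -/
open MeasureTheory ProbabilityTheory Real

variable {Ω : Type*} [MeasureSpace Ω]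

noncomputable def prob {𝒳 : Type*} (X : Ω → 𝒳) (x : 𝒳) : ℝ :=
  (ℙ (X ⁻¹' {x})).toReal

noncomputable def entropy {𝒳 : Type*} [Fintype 𝒳] (X : Ω → 𝒳) : ℝ :=
  -∑ x, prob X x * Real.log (prob X x)

noncomputable def condEntropy {𝒳 𝒴 : Type*} [Fintype 𝒳] [Fintype 𝒴]
    (X : Ω → 𝒳) (Y : Ω → 𝒴) : ℝ :=
  entropy (fun ω => (X ω, Y ω)) - entropy Y

noncomputable def mutualInfo {𝒳 𝒴 : Type*} [Fintype 𝒳] [Fintype 𝒴]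
    (X : Ω → 𝒳) (Y : Ω → 𝒴) : ℝ :=
  entropy X + entropy Y - entropy (fun ω => (X ω, Y ω))

noncomputable def condMutualInfo {𝒳 𝒴 𝒵 : Type*} [Fintype 𝒳] [Fintype 𝒴] [Fintype 𝒵]
    (X : Ω → 𝒳) (Y : Ω → 𝒴) (Z : Ω → 𝒵) : ℝ :=
  entropy (fun ω => (X ω, Z ω)) + entropy (fun ω => (Y ω, Z ω))
    - entropy (fun ω => (X ω, Y ω, Z ω)) - entropy Z

def hist {𝒳 : Type*} {T : ℕ} (X : Fin T → Ω → 𝒳) (t : ℕ) (ht : t ≤ T) : Ω → (Fin t → 𝒳) :=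
  fun ω i => X (Fin.castLE ht i) ω

/-! Both `I[H_T ; θ] + I[θ ; θ̃ | H_T]` and `I[θ ; θ̃] + I[H_T ; θ | θ̃]` equal `I[θ ; (H_T, θ̃)]`
(chain rule). Conditional mutual information is nonnegative by Gibbs' inequality, so
`I[H_T ; θ] ≤ I[θ ; θ̃] + I[H_T ; θ | θ̃] ≤ I[θ ; θ̃] + ε T`. -/

open Finset

section

variable {α β γ : Type*}

theorem sum_mul_log_le_sum_mul_log [Fintype α] {p q : α → ℝ} (hp : ∀ a, 0 ≤ p a)
    (hq : ∀ a, 0 ≤ q a) (hpq : ∀ a, 0 < p a → 0 < q a) (hsum : ∑ a, q a ≤ ∑ a, p a) :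
    ∑ a, p a * log (q a) ≤ ∑ a, p a * log (p a) := by
  have termwise : ∀ a, p a * log (q a) - p a * log (p a) ≤ q a - p a := by
    intro a
    rcases (hp a).eq_or_lt with hpa | hpa
    · simp [← hpa, hq a]
    · have hqa := hpq a hpa
      calc p a * log (q a) - p a * log (p a) = p a * log (q a / p a) := by
            rw [log_div hqa.ne' hpa.ne']; ring
        _ ≤ p a * (q a / p a - 1) := by gcongr; exact log_le_sub_one_of_pos (by positivity)
        _ = q a - p a := by field_simp
  have hsum_termwise := sum_le_sum fun a (_ : a ∈ univ) => termwise a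
  rw [sum_sub_distrib, sum_sub_distrib] at hsum_termwise
  linarith

lemma prob_comp_of_injective (X : Ω → α) {f : α → β} (hf : f.Injective) (x : α) :
    prob (fun ω => f (X ω)) (f x) = prob X x := by
  simp only [prob, Set.preimage, Set.mem_singleton_iff, hf.eq_iff]

lemma entropy_comp_equiv [Fintype α] [Fintype β] (X : Ω → α) (e : α ≃ β) :
    entropy (fun ω => e (X ω)) = entropy X := by
  simp only [entropy, ← e.sum_comp, prob_comp_of_injective X e.injective]

lemma entropy_prod_comm [Fintype α] [Fintype β] (X : Ω → α) (Y : Ω → β) :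
    entropy (fun ω => (X ω, Y ω)) = entropy (fun ω => (Y ω, X ω)) :=
  entropy_comp_equiv (fun ω => (Y ω, X ω)) (Equiv.prodComm β α)

lemma entropy_prod_rotate [Fintype α] [Fintype β] [Fintype γ]
    (X : Ω → α) (Y : Ω → β) (Z : Ω → γ) :
    entropy (fun ω => (X ω, Y ω, Z ω)) = entropy (fun ω => (Z ω, X ω, Y ω)) :=
  (entropy_comp_equiv (fun ω => (X ω, Y ω, Z ω))
    ((Equiv.prodAssoc α β γ).symm.trans (Equiv.prodComm _ γ))).symm

theorem mutualInfo_add_condMutualInfo_comm [Fintype α] [Fintype β] [Fintype γ]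
    (X : Ω → α) (Y : Ω → β) (Z : Ω → γ) :
    mutualInfo X Y + condMutualInfo Y Z X = mutualInfo Y Z + condMutualInfo X Y Z := by
  simp only [mutualInfo, condMutualInfo]
  linarith [entropy_prod_rotate Y Z X, entropy_prod_comm X Y, entropy_prod_comm Y Z,
    entropy_prod_comm Z X]

lemma prob_nonneg (X : Ω → α) (x : α) : 0 ≤ prob X x :=
  ENNReal.toReal_nonneg

/-- The law `(X, Y, Z)` would have if `X` and `Y` were independent given `Z`. -/
noncomputable def condIndepLaw (X : Ω → α) (Y : Ω → β) (Z : Ω → γ) (w : α × β × γ) : ℝ :=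
  prob (fun ω => (X ω, Z ω)) (w.1, w.2.2) * prob (fun ω => (Y ω, Z ω)) w.2 / prob Z w.2.2

lemma condIndepLaw_nonneg (X : Ω → α) (Y : Ω → β) (Z : Ω → γ) (w : α × β × γ) :
    0 ≤ condIndepLaw X Y Z w :=
  div_nonneg (mul_nonneg (prob_nonneg _ _) (prob_nonneg _ _)) (prob_nonneg _ _)

section FiniteMeasure

variable [IsFiniteMeasure (ℙ : Measure Ω)]

lemma prob_le_prob_comp (X : Ω → α) (f : α → β) (x : α) :
    prob X x ≤ prob (fun ω => f (X ω)) (f x) :=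
  measureReal_mono fun ω (h : X ω = x) => congrArg f h

variable [Fintype α] [MeasurableSpace α] [MeasurableSingletonClass α]

lemma prob_comp_eq_sum_fiber [DecidableEq β] {X : Ω → α} (hX : Measurable X) (f : α → β)
    (y : β) : prob (fun ω => f (X ω)) y = ∑ x with f x = y, prob X x := by
  simp only [prob, ← measureReal_def]
  rw [sum_measureReal_preimage_singleton _ fun x _ => hX (measurableSet_singleton x)]
  congr 1
  ext ω
  simp

lemma sum_prob_eq_measureReal_univ {X : Ω → α} (hX : Measurable X) :
    ∑ x, prob X x = (ℙ : Measure Ω).real Set.univ := by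
  simp only [prob, ← measureReal_def]
  rw [sum_measureReal_preimage_singleton _ fun x _ => hX (measurableSet_singleton x)]
  simp

lemma sum_prob_prod_left [Fintype β] [MeasurableSpace β] [MeasurableSingletonClass β]
    {X : Ω → α} {Y : Ω → β} (hX : Measurable X) (hY : Measurable Y) (y : β) :
    ∑ x, prob (fun ω => (X ω, Y ω)) (x, y) = prob Y y := by
  classical
  rw [show prob Y y = prob (fun ω => (X ω, Y ω).2) y from rfl,
    prob_comp_eq_sum_fiber (hX.prodMk hY), sum_filter, Fintype.sum_prod_type]
  simp

lemma entropy_comp_eq_sum [Fintype β] {X : Ω → α} (hX : Measurable X) (f : α → β) :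
    entropy (fun ω => f (X ω)) = -∑ x, prob X x * log (prob (fun ω => f (X ω)) (f x)) := by
  classical
  rw [entropy, ← sum_fiberwise univ f]
  congr 1
  refine sum_congr rfl fun y _ => ?_
  rw [sum_congr rfl fun x hx => by rw [(mem_filter.mp hx).2], ← sum_mul,
    ← prob_comp_eq_sum_fiber hX f y]

variable [Fintype β] [MeasurableSpace β] [MeasurableSingletonClass β]
  [Fintype γ] [MeasurableSpace γ] [MeasurableSingletonClass γ]
  {X : Ω → α} {Y : Ω → β} {Z : Ω → γ}

lemma sum_condIndepLaw (hX : Measurable X) (hY : Measurable Y) (hZ : Measurable Z) :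
    ∑ w, condIndepLaw X Y Z w = (ℙ : Measure Ω).real Set.univ := by
  rw [← sum_prob_eq_measureReal_univ hZ, Fintype.sum_prod_type_right,
    Fintype.sum_prod_type_right]
  refine sum_congr rfl fun z _ => ?_
  simp_rw [condIndepLaw, ← sum_div, ← sum_mul, ← mul_sum, sum_prob_prod_left hX hZ,
    sum_prob_prod_left hY hZ, mul_self_div_self]

theorem condMutualInfo_nonneg (hX : Measurable X) (hY : Measurable Y) (hZ : Measurable Z) :
    0 ≤ condMutualInfo X Y Z := by
  set W : Ω → α × β × γ := fun ω => (X ω, Y ω, Z ω)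
  have hW : Measurable W := hX.prodMk (hY.prodMk hZ)
  set p := prob W
  set pXZ : α × β × γ → ℝ := fun w => prob (fun ω => (X ω, Z ω)) (w.1, w.2.2)
  set pYZ : α × β × γ → ℝ := fun w => prob (fun ω => (Y ω, Z ω)) w.2
  set pZ : α × β × γ → ℝ := fun w => prob Z w.2.2
  set r := condIndepLaw X Y Z
  have hmarg_pos : ∀ w, 0 < p w → 0 < pXZ w ∧ 0 < pYZ w ∧ 0 < pZ w := fun w hp =>
    ⟨hp.trans_le (prob_le_prob_comp W (fun w => (w.1, w.2.2)) w),
      hp.trans_le (prob_le_prob_comp W Prod.snd w),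
      hp.trans_le (prob_le_prob_comp W (fun w => w.2.2) w)⟩
  have hlog_r : ∀ w, p w * log (r w) =
      p w * log (pXZ w) + p w * log (pYZ w) - p w * log (pZ w) := by
    intro w
    rcases (prob_nonneg W w).eq_or_lt with hp | hp
    · simp [p, ← hp]
    obtain ⟨hXZ, hYZ, hZ⟩ := hmarg_pos w hp
    rw [show r w = pXZ w * pYZ w / pZ w from rfl, log_div (by positivity) hZ.ne',
      log_mul hXZ.ne' hYZ.ne']
    ring
  have hcmi : condMutualInfo X Y Z = ∑ w, p w * log (p w) - ∑ w, p w * log (r w) := by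
    have hXZ : entropy (fun ω => (X ω, Z ω)) = -∑ w, p w * log (pXZ w) :=
      entropy_comp_eq_sum hW fun w => (w.1, w.2.2)
    have hYZ : entropy (fun ω => (Y ω, Z ω)) = -∑ w, p w * log (pYZ w) :=
      entropy_comp_eq_sum hW Prod.snd
    have hZ : entropy Z = -∑ w, p w * log (pZ w) := entropy_comp_eq_sum hW fun w => w.2.2
    have hXYZ : entropy W = -∑ w, p w * log (p w) := entropy_comp_eq_sum hW id
    rw [condMutualInfo, hXZ, hYZ, hZ, hXYZ]
    simp only [hlog_r, sum_sub_distrib, sum_add_distrib]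
    ring
  have hr_pos : ∀ w, 0 < p w → 0 < r w := fun w hp => by
    obtain ⟨hXZ, hYZ, hZ⟩ := hmarg_pos w hp
    exact div_pos (mul_pos hXZ hYZ) hZ
  have hr_sum : ∑ w, r w ≤ ∑ w, p w := by
    rw [sum_condIndepLaw hX hY hZ, sum_prob_eq_measureReal_univ hW]
  linarith [sum_mul_log_le_sum_mul_log (prob_nonneg W) (condIndepLaw_nonneg X Y Z) hr_pos hr_sum]

theorem mutualInfo_le_mutualInfo_add_condMutualInfo (hX : Measurable X) (hY : Measurable Y)
    (hZ : Measurable Z) : mutualInfo X Y ≤ mutualInfo Y Z + condMutualInfo X Y Z := by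
  linarith [mutualInfo_add_condMutualInfo_comm X Y Z, condMutualInfo_nonneg hY hZ hX]

end FiniteMeasure

end

theorem rate_distortion_upper_bound_general
    {Ω : Type*} [MeasureSpace Ω] [IsProbabilityMeasure (ℙ : Measure Ω)]
    {𝒳 Θ Θ' : Type*} [Fintype 𝒳] [Fintype Θ] [Fintype Θ']
    [MeasurableSpace 𝒳] [MeasurableSingletonClass 𝒳]
    [MeasurableSpace Θ] [MeasurableSingletonClass Θ]
    [MeasurableSpace Θ'] [MeasurableSingletonClass Θ']
    (T : ℕ) (X : Fin T → Ω → 𝒳) (θ : Ω → Θ) (θ' : Ω → Θ')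
    (hX : ∀ t, Measurable (X t)) (hθ : Measurable θ) (hθ' : Measurable θ')
    (ε : ℝ) (hdist : condMutualInfo (hist X T le_rfl) θ θ' ≤ ε * T) :
    mutualInfo (hist X T le_rfl) θ ≤ mutualInfo θ θ' + ε * T :=
  have hH : Measurable (hist X T le_rfl) := measurable_pi_lambda _ fun _ => hX _
  (mutualInfo_le_mutualInfo_add_condMutualInfo hH hθ hθ').trans (add_le_add le_rfl hdist)

/-- **Rate-distortion estimation error bound, upper bound** (paper, Theorem 2, upper bound,
with the infimum over compressions unfolded into a universally quantified statement).
For every compression `θ̃` of `θ` satisfying `I[H_T ; θ̃ | θ] = 0` (no exogenous information)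
and the distortion constraint `I[H_T ; θ | θ̃] ≤ ε T`, the estimation error satisfies
`I[H_T ; θ] ≤ I[θ ; θ̃] + ε T`. -/
theorem rate_distortion_upper_bound
    {Ω : Type*} [MeasureSpace Ω] [IsProbabilityMeasure (ℙ : Measure Ω)]
    {𝒳 Θ Θ' : Type*} [Fintype 𝒳] [Nonempty 𝒳] [Fintype Θ] [Nonempty Θ]
    [Fintype Θ'] [Nonempty Θ']
    [MeasurableSpace 𝒳] [MeasurableSingletonClass 𝒳]
    [MeasurableSpace Θ] [MeasurableSingletonClass Θ]
    [MeasurableSpace Θ'] [MeasurableSingletonClass Θ']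
    (T : ℕ) (hT : 1 ≤ T)
    (X : Fin T → Ω → 𝒳) (θ : Ω → Θ) (θ' : Ω → Θ')
    (hX : ∀ t, Measurable (X t)) (hθ : Measurable θ) (hθ' : Measurable θ')
    (ε : ℝ) (hε : 0 ≤ ε)
    (hindep : condMutualInfo (hist X T le_rfl) θ' θ = 0)
    (hdist : condMutualInfo (hist X T le_rfl) θ θ' ≤ ε * T) :
    mutualInfo (hist X T le_rfl) θ ≤ mutualInfo θ θ' + ε * T :=
  rate_distortion_upper_bound_general T X θ θ' hX hθ hθ' ε hdist
end

section
/- Squared error upper bounds softmax KL-divergence: for every d ≥ 1 and all vectors u, v ∈ ℝ^d, Σ_{l=1}^{d} (e^{u_l} / Σ_{k=1}^{d} e^{u_k}) · ln[ (e^{u_l} / Σ_{k=1}^{d} e^{u_k}) / (e^{v_l} / Σ_{k=1}^{d} e^{v_k}) ] ≤ Σ_{l=1}^{d} (u_l − v_l)², i.e. the Kullback–Leibler divergence between the softmax distributions of u and of v is at most the squared Euclidean distance ‖u − v‖₂². (Paper: Lemma 'sq error upper bounds softmax KL-divergence'.) -/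
/-!
Writing `δ = v - u` and `p = softmax u`, one has
`softmax v l = p l * exp (δ l) / ∑ k, p k * exp (δ k)`, so the divergence equals
`log (∑ l, p l * exp (δ l - ∑ k, p k * δ k))`: the cumulant generating function at `1` of the
centred random variable `δ` under `p`. Every `δ l` lies in `[-R, R]` with `R = ‖u - v‖₂`, so
Hoeffding's lemma bounds it by `(2R)² / 8 = ‖u - v‖₂² / 2`.
-/

open Real ProbabilityTheory MeasureTheory

theorem log_sum_mul_exp_sub_le_of_mem_Icc {ι : Type*} [Fintype ι] {w x : ι → ℝ}
    (hw₀ : ∀ i, 0 ≤ w i) (hw₁ : ∑ i, w i = 1) {a b : ℝ} (hx : ∀ i, x i ∈ Set.Icc a b) :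
    log (∑ i, w i * exp (x i - ∑ j, w j * x j)) ≤ (b - a) ^ 2 / 8 := by
  let _ : MeasurableSpace ι := ⊤
  have hsum : ∑ i, ENNReal.ofReal (w i) = 1 := by
    rw [← ENNReal.ofReal_sum_of_nonneg (fun i _ => hw₀ i), hw₁, ENNReal.ofReal_one]
  set μ := (PMF.ofFintype _ hsum).toMeasure
  have integral_eq (f : ι → ℝ) : ∫ i, f i ∂μ = ∑ i, w i * f i := by
    simp [μ, PMF.integral_eq_sum, ENNReal.toReal_ofReal (hw₀ _)]
  have hoeffding :=
    (hasSubgaussianMGF_of_mem_Icc (μ := μ) (by fun_prop) (ae_of_all _ hx)).mgf_le 1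
  rw [mgf, integral_eq, integral_eq] at hoeffding
  obtain ⟨j, -, hj⟩ := Finset.exists_ne_zero_of_sum_ne_zero (hw₁.trans_ne one_ne_zero)
  have hpos : 0 < ∑ i, w i * exp (x i - ∑ j, w j * x j) :=
    Finset.sum_pos' (fun i _ => by have := hw₀ i; positivity)
      ⟨j, Finset.mem_univ j, mul_pos ((hw₀ j).lt_of_ne' hj) (exp_pos _)⟩
  calc log (∑ i, w i * exp (x i - ∑ j, w j * x j))
      ≤ ((‖b - a‖₊ / 2) ^ 2 : NNReal) * 1 ^ 2 / 2 :=
        (log_le_iff_le_exp hpos).2 (by simpa using hoeffding)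
    _ = (b - a) ^ 2 / 8 := by push_cast; rw [Real.norm_eq_abs, div_pow, sq_abs]; ring

section Softmax

variable {ι : Type*} [Fintype ι]

noncomputable def softmax (u : ι → ℝ) (l : ι) : ℝ :=
  exp (u l) / ∑ k, exp (u k)

theorem sum_softmax_mul_exp_sub (u v : ι → ℝ) :
    ∑ l, softmax u l * exp (v l - u l) = (∑ k, exp (v k)) / ∑ k, exp (u k) := by
  simp only [softmax, div_mul_eq_mul_div, ← exp_add, add_sub_cancel, ← Finset.sum_div]

variable [Nonempty ι]

theorem sum_exp_pos (u : ι → ℝ) : 0 < ∑ k, exp (u k) :=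
  Finset.sum_pos (fun _ _ => exp_pos _) Finset.univ_nonempty

theorem softmax_pos (u : ι → ℝ) (l : ι) : 0 < softmax u l :=
  div_pos (exp_pos _) (sum_exp_pos u)

theorem sum_softmax (u : ι → ℝ) : ∑ l, softmax u l = 1 := by
  simp only [softmax, ← Finset.sum_div, div_self (sum_exp_pos u).ne']

theorem log_softmax (u : ι → ℝ) (l : ι) : log (softmax u l) = u l - log (∑ k, exp (u k)) := by
  rw [softmax, log_div (exp_pos _).ne' (sum_exp_pos u).ne', log_exp]

theorem klDiv_softmax_eq_log_sum_mul_exp (u v : ι → ℝ) :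
    ∑ l, softmax u l * log (softmax u l / softmax v l)
      = log (∑ l, softmax u l * exp ((v l - u l) - ∑ k, softmax u k * (v k - u k))) := by
  set m := ∑ k, softmax u k * (v k - u k)
  have hcentre : ∑ l, softmax u l * exp ((v l - u l) - m)
      = (∑ l, softmax u l * exp (v l - u l)) / exp m := by
    simp only [Finset.sum_div, exp_sub _ m, mul_div_assoc]
  rw [hcentre, sum_softmax_mul_exp_sub, log_div (div_pos (sum_exp_pos v) (sum_exp_pos u)).ne'
    (exp_pos _).ne', log_exp, log_div (sum_exp_pos v).ne' (sum_exp_pos u).ne']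
  simp only [m, log_div (softmax_pos u _).ne' (softmax_pos v _).ne', log_softmax, mul_sub,
    Finset.sum_sub_distrib, ← Finset.sum_mul, sum_softmax]
  ring

end Softmax

/-- **Squared error upper bounds softmax KL-divergence** (paper, Lemma `sq error upper
bounds softmax KL-divergence').  For every `d ≥ 1` and all `u, v ∈ ℝ^d`, the
Kullback–Leibler divergence between the softmax distributions of `u` and of `v` is at most
the squared Euclidean distance `‖u − v‖₂²`. -/
theorem softmax_klDiv_le_sq_dist (d : ℕ) (hd : 1 ≤ d) (u v : Fin d → ℝ) :
    ∑ l, (Real.exp (u l) / ∑ k, Real.exp (u k)) *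
        Real.log ((Real.exp (u l) / ∑ k, Real.exp (u k)) /
          (Real.exp (v l) / ∑ k, Real.exp (v k)))
      ≤ ∑ l, (u l - v l) ^ 2 := by
  have : Nonempty (Fin d) := Fin.pos_iff_nonempty.mp hd
  set R := √(∑ l, (u l - v l) ^ 2)
  have hR (l : Fin d) : v l - u l ∈ Set.Icc (-R) R := by
    refine abs_le.mp (abs_le_sqrt ?_)
    rw [← neg_sub, neg_sq]
    exact Finset.single_le_sum (fun k _ => sq_nonneg (u k - v k)) (Finset.mem_univ l)
  calc _ = log (∑ l, softmax u l * exp ((v l - u l) - ∑ k, softmax u k * (v k - u k))) :=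
        klDiv_softmax_eq_log_sum_mul_exp u v
    _ ≤ (R - -R) ^ 2 / 8 :=
        log_sum_mul_exp_sub_le_of_mem_Icc (fun l => (softmax_pos u l).le) (sum_softmax u) hR
    _ = (∑ l, (u l - v l) ^ 2) / 2 := by
        rw [sub_neg_eq_add, ← two_mul, mul_pow, sq_sqrt (by positivity)]; ring
    _ ≤ ∑ l, (u l - v l) ^ 2 := half_le_self (by positivity)
end

section
/- Logistic KL inequality: for all real numbers x and y, ln((1 + e^{−y})/(1 + e^{−x})) / (1 + e^{−x}) + ln((1 + e^{y})/(1 + e^{x})) / (1 + e^{x}) ≤ (x − y)². Equivalently, the Kullback–Leibler divergence between the Bernoulli distribution with success probability 1/(1+e^{−x}) and the Bernoulli distribution with success probability 1/(1+e^{−y}) is at most (x − y)². (Paper: the pointwise fact used in step (b) of the logistic regression Bayesian error bound.) -/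
/-!
With `p = sigmoid x`, `q = sigmoid y` the left-hand side is the Bernoulli divergence `KL(p ‖ q)`. The
log-odds of `p` and `q` differ by `x - y`, so `KL(p ‖ q) = log ((1 - p) / (1 - q)) + p (x - y)`,
and `log t ≤ t - 1` bounds this by `p (e^{-d} - 1 + d)` with `d = x - y`. For `d ≥ 0`,
`e^{-d} ≤ 1 / (1 + d)` gives `e^{-d} - 1 + d ≤ d² / (1 + d) ≤ d²`; the case `d ≤ 0` follows from
the symmetry `(x, y, p, q) ↦ (-x, -y, 1 - p, 1 - q)`.
-/

open Real

noncomputable def klBernoulli (p q : ℝ) : ℝ :=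
  p * log (p / q) + (1 - p) * log ((1 - p) / (1 - q))

lemma klBernoulli_one_sub (p q : ℝ) : klBernoulli (1 - p) (1 - q) = klBernoulli p q := by
  simp only [klBernoulli, sub_sub_cancel]
  ring

lemma klBernoulli_sigmoid_eq_log_one_add_exp (x y : ℝ) :
    klBernoulli (sigmoid x) (sigmoid y) =
      log ((1 + exp (-y)) / (1 + exp (-x))) / (1 + exp (-x))
        + log ((1 + exp y) / (1 + exp x)) / (1 + exp x) := by
  rw [klBernoulli, ← sigmoid_neg, ← sigmoid_neg]
  simp only [sigmoid_def, neg_neg, inv_div_inv]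
  ring

lemma sigmoid_eq_sigmoid_neg_mul_exp (x : ℝ) : sigmoid x = sigmoid (-x) * exp x := by
  rw [← sigmoid_mul_rexp_neg, mul_assoc, ← exp_add, neg_add_cancel, exp_zero, mul_one]

lemma log_sigmoid_div_sigmoid (x y : ℝ) :
    log (sigmoid x / sigmoid y) = log (sigmoid (-x) / sigmoid (-y)) + (x - y) := by
  rw [sigmoid_eq_sigmoid_neg_mul_exp x, sigmoid_eq_sigmoid_neg_mul_exp y, mul_div_mul_comm,
    ← exp_sub, log_mul (div_pos (sigmoid_pos _) (sigmoid_pos _)).ne' (exp_pos _).ne', log_exp]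

lemma klBernoulli_sigmoid_eq_log_add_mul_sub (x y : ℝ) :
    klBernoulli (sigmoid x) (sigmoid y) =
      log (sigmoid (-x) / sigmoid (-y)) + sigmoid x * (x - y) := by
  rw [klBernoulli, log_sigmoid_div_sigmoid, sigmoid_neg x, sigmoid_neg y]
  ring

lemma sigmoid_neg_div_sigmoid_neg_sub_one (x y : ℝ) :
    sigmoid (-x) / sigmoid (-y) - 1 = sigmoid x * (exp (y - x) - 1) := by
  simp only [sigmoid_def, neg_neg, exp_sub, exp_neg]
  field_simp
  ring

lemma klBernoulli_sigmoid_le (x y : ℝ) :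
    klBernoulli (sigmoid x) (sigmoid y) ≤ sigmoid x * (exp (y - x) - 1 + (x - y)) := by
  have hlog := log_le_sub_one_of_pos (div_pos (sigmoid_pos (-x)) (sigmoid_pos (-y)))
  rw [sigmoid_neg_div_sigmoid_neg_sub_one] at hlog
  rw [klBernoulli_sigmoid_eq_log_add_mul_sub]
  linarith

lemma exp_neg_sub_one_add_le_sq {d : ℝ} (hd : 0 ≤ d) : exp (-d) - 1 + d ≤ d ^ 2 :=
  calc exp (-d) - 1 + d ≤ (1 + d)⁻¹ - 1 + d := by
        gcongr
        rw [exp_neg]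
        exact inv_anti₀ (by positivity) (by linarith [add_one_le_exp d])
    _ = d ^ 2 / (1 + d) := by field_simp; ring
    _ ≤ d ^ 2 := div_le_self (sq_nonneg d) (by linarith)

lemma klBernoulli_sigmoid_le_sq_of_le {x y : ℝ} (h : y ≤ x) :
    klBernoulli (sigmoid x) (sigmoid y) ≤ (x - y) ^ 2 := by
  have hd : exp (y - x) - 1 + (x - y) ≤ (x - y) ^ 2 := by
    simpa only [neg_sub] using exp_neg_sub_one_add_le_sq (sub_nonneg.mpr h)
  have hd0 : 0 ≤ exp (y - x) - 1 + (x - y) := by linarith [add_one_le_exp (y - x)]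
  calc klBernoulli (sigmoid x) (sigmoid y) ≤ sigmoid x * (exp (y - x) - 1 + (x - y)) :=
        klBernoulli_sigmoid_le x y
    _ ≤ 1 * (x - y) ^ 2 := by gcongr; exact sigmoid_le_one x
    _ = (x - y) ^ 2 := one_mul _

/-- **Logistic KL inequality** (paper: the pointwise fact used in step (b) of the logistic
regression Bayesian error bound).  For all real `x`, `y`,
`ln((1+e^{−y})/(1+e^{−x}))/(1+e^{−x}) + ln((1+e^{y})/(1+e^{x}))/(1+e^{x}) ≤ (x−y)²`;
equivalently, the KL divergence between Bernoulli(`1/(1+e^{−x})`) and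
Bernoulli(`1/(1+e^{−y})`) is at most `(x − y)²`. -/
theorem logistic_kl_le_sq (x y : ℝ) :
    Real.log ((1 + Real.exp (-y)) / (1 + Real.exp (-x))) / (1 + Real.exp (-x))
        + Real.log ((1 + Real.exp y) / (1 + Real.exp x)) / (1 + Real.exp x)
      ≤ (x - y) ^ 2 := by
  rw [← klBernoulli_sigmoid_eq_log_one_add_exp]
  rcases le_total y x with h | h
  · exact klBernoulli_sigmoid_le_sq_of_le h
  · have := klBernoulli_sigmoid_le_sq_of_le (neg_le_neg h)
    rwa [sigmoid_neg, sigmoid_neg, klBernoulli_one_sub, neg_sub_neg, sub_sq_comm] at this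
end

section
/- Misspecified prior error bound: let Ψ and 𝒳 be nonempty finite types and n ≥ 1. Let π and π̃ be probability measures on Ψ with π(ψ) > 0 ⟹ π̃(ψ) > 0, and let κ : Ψ → (probability measures on 𝒳^n) be a likelihood kernel. Let μ and ν be the probability measures on Ψ × 𝒳^n with μ({(ψ,x)}) = π({ψ})·κ(ψ)({x}) and ν({(ψ,x)}) = π̃({ψ})·κ(ψ)({x}), and let X = (X_1,…,X_n) denote the 𝒳^n-coordinate. Then Σ_{t=0}^{n−1} E_μ[ d_KL( μ-conditional law of X_{t+1} given (X_1,…,X_t) ‖ ν-conditional law of X_{t+1} given (X_1,…,X_t) ) ] = d_KL( μ-law of X ‖ ν-law of X ) ≤ d_KL(π ‖ π̃). (Paper: Theorem 'misspecified prior error bound', via the chain rule and the data processing inequality for KL divergence.) -/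
/-!
Let `P_m`, `Q_m` be the laws of the first `m` observations under `μ` and `ν`. Normalising the
joint pmf of `(X_{1:t}, X_{t+1})` by the mass of each history splits its KL divergence, so the
`t`-th summand is `KL(P_{t+1} ‖ Q_{t+1}) - KL(P_t ‖ Q_t)`; the sum telescopes to `KL(P_n ‖ Q_n)`
since `P_0 = Q_0 = 1`. For the bound, `μ = π ⊗ₘ κ` and `ν = π̃ ⊗ₘ κ`, so the laws of the data are
`κ ∘ₘ π` and `κ ∘ₘ π̃`, and the data processing inequality for `klDiv` applies once `klDiv` is
identified with the finite sum `klFin` on a finite discrete space.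
-/

open MeasureTheory

/-- Kullback–Leibler divergence (natural log) between two pmfs on a finite type,
given as real-valued functions. -/
noncomputable def klFin {α : Type*} [Fintype α] (p q : α → ℝ) : ℝ :=
  ∑ x, p x * Real.log (p x / q x)

/-- The conditional law, under a joint measure `μ` on `Ψ × 𝒳^n`, of the `(t+1)`-st
coordinate of the `𝒳^n`-component given that its first `t` coordinates equal `h`. -/
noncomputable def condLaw {Ψ 𝒳 : Type*} [MeasurableSpace Ψ] [MeasurableSpace 𝒳] {n : ℕ}
    (μ : Measure (Ψ × (Fin n → 𝒳))) (t : Fin n) (h : Fin t.val → 𝒳) (x : 𝒳) : ℝ :=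
  (μ {p | (∀ i : Fin t.val, p.2 (Fin.castLE t.isLt.le i) = h i) ∧ p.2 t = x}).toReal /
    (μ {p | ∀ i : Fin t.val, p.2 (Fin.castLE t.isLt.le i) = h i}).toReal

open ProbabilityTheory InformationTheory

lemma sum_mul_klFin_div_sum {α : Type*} [Fintype α] {p q : α → ℝ} (hp : ∀ x, 0 ≤ p x)
    (hq : ∀ x, 0 ≤ q x) (hpq : ∀ x, q x = 0 → p x = 0) :
    (∑ x, p x) * klFin (fun x => p x / ∑ x, p x) (fun x => q x / ∑ x, q x) =
      klFin p q - (∑ x, p x) * Real.log ((∑ x, p x) / ∑ x, q x) := by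
  rcases (Finset.sum_nonneg fun x _ => hp x).eq_or_lt with hP | hP
  · have hp0 : ∀ x, p x = 0 := fun x =>
      (Finset.sum_eq_zero_iff_of_nonneg fun x _ => hp x).1 hP.symm x (Finset.mem_univ x)
    simp [klFin, hp0]
  have hQ : 0 < ∑ x, q x := by
    refine (Finset.sum_nonneg fun x _ => hq x).lt_of_ne fun hQ => hP.ne' ?_
    refine Finset.sum_eq_zero fun x _ => hpq x ?_
    exact (Finset.sum_eq_zero_iff_of_nonneg fun x _ => hq x).1 hQ.symm x (Finset.mem_univ x)
  rw [klFin, klFin, Finset.mul_sum, Finset.sum_mul, ← Finset.sum_sub_distrib]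
  refine Finset.sum_congr rfl fun x _ => ?_
  rcases (hp x).eq_or_lt with hpx | hpx
  · simp [← hpx]
  have hqx : q x ≠ 0 := fun h => hpx.ne' (hpq x h)
  rw [div_div_div_eq, mul_comm (p x), ← div_mul_div_comm,
    Real.log_mul (div_ne_zero hQ.ne' hP.ne') (div_ne_zero hpx.ne' hqx),
    Real.log_div hQ.ne' hP.ne', Real.log_div hP.ne' hQ.ne']
  field_simp
  ring

lemma forall_castLE_snoc_iff {𝒳 : Type*} {n m : ℕ} (hm : m < n) (g : Fin n → 𝒳)
    (h : Fin m → 𝒳) (x : 𝒳) :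
    (∀ i : Fin (m + 1), g (Fin.castLE hm i) = Fin.snoc (α := fun _ => 𝒳) h x i) ↔
      (∀ i : Fin m, g (Fin.castLE hm.le i) = h i) ∧ g ⟨m, hm⟩ = x := by
  simp only [Fin.forall_fin_succ', Fin.snoc_castSucc, Fin.snoc_last, Fin.castLE_castSucc]
  rfl

section Prefix

variable {Ψ 𝒳 : Type*} [MeasurableSpace Ψ] [MeasurableSpace 𝒳] {n : ℕ}

noncomputable def prefixMass (μ : Measure (Ψ × (Fin n → 𝒳))) (m : ℕ) (hm : m ≤ n)
    (h : Fin m → 𝒳) : ℝ :=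
  (μ {p | ∀ i : Fin m, p.2 (Fin.castLE hm i) = h i}).toReal

lemma condLaw_eq_div (μ : Measure (Ψ × (Fin n → 𝒳))) (t : Fin n) (h : Fin t.val → 𝒳)
    (x : 𝒳) :
    condLaw μ t h x =
      prefixMass μ (t + 1) t.isLt (Fin.snoc h x) / prefixMass μ t t.isLt.le h := by
  simp only [condLaw, prefixMass, forall_castLE_snoc_iff]

lemma prefixMass_self (μ : Measure (Ψ × (Fin n → 𝒳))) (g : Fin n → 𝒳) :
    prefixMass μ n le_rfl g = (μ {p | p.2 = g}).toReal := by
  simp only [prefixMass, Fin.castLE_rfl, id, ← funext_iff]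

lemma prefixMass_zero (μ : Measure (Ψ × (Fin n → 𝒳))) [IsProbabilityMeasure μ]
    (h : Fin 0 → 𝒳) : prefixMass μ 0 n.zero_le h = 1 := by
  simp [prefixMass]

lemma prefixMass_eq_zero_of_absolutelyContinuous {μ ν : Measure (Ψ × (Fin n → 𝒳))}
    [IsFiniteMeasure ν] (hμν : μ ≪ ν) {m : ℕ} (hm : m ≤ n) (h : Fin m → 𝒳)
    (hν : prefixMass ν m hm h = 0) : prefixMass μ m hm h = 0 := by
  rw [prefixMass, ENNReal.toReal_eq_zero_iff] at hν ⊢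
  exact .inl (hμν (hν.resolve_right (measure_ne_top _ _)))

variable [Fintype 𝒳] [MeasurableSingletonClass 𝒳]

lemma sum_prefixMass_snoc (μ : Measure (Ψ × (Fin n → 𝒳))) [IsFiniteMeasure μ] {m : ℕ}
    (hm : m < n) (h : Fin m → 𝒳) :
    ∑ x, prefixMass μ (m + 1) hm (Fin.snoc h x) = prefixMass μ m hm.le h := by
  set A := {p : Ψ × (Fin n → 𝒳) | ∀ i : Fin m, p.2 (Fin.castLE hm.le i) = h i}
  have hlast : Measurable fun p : Ψ × (Fin n → 𝒳) => p.2 ⟨m, hm⟩ :=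
    (measurable_pi_apply _).comp measurable_snd
  calc ∑ x, prefixMass μ (m + 1) hm (Fin.snoc h x)
      = ∑ x, (μ.restrict A ((fun p => p.2 ⟨m, hm⟩) ⁻¹' {x})).toReal := by
        refine Finset.sum_congr rfl fun x _ => ?_
        rw [prefixMass, Measure.restrict_apply (hlast (measurableSet_singleton x))]
        simp only [forall_castLE_snoc_iff, Set.ofPred_and, Set.inter_comm]
        rfl
    _ = (μ.restrict A Set.univ).toReal := by
        rw [← ENNReal.toReal_sum (fun x _ => measure_ne_top _ _),
          sum_measure_preimage_singleton _ fun x _ => hlast (measurableSet_singleton x)]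
        simp
    _ = prefixMass μ m hm.le h := by rw [Measure.restrict_apply_univ]; rfl

variable {μ ν : Measure (Ψ × (Fin n → 𝒳))}

lemma sum_prefixMass_mul_klFin_condLaw_eq_sub [IsFiniteMeasure μ] [IsFiniteMeasure ν] (hμν : μ ≪ ν)
    (t : Fin n) :
    ∑ h : Fin t → 𝒳, prefixMass μ t t.isLt.le h * klFin (condLaw μ t h) (condLaw ν t h) =
      klFin (prefixMass μ (t + 1) t.isLt) (prefixMass ν (t + 1) t.isLt) -
        klFin (prefixMass μ t t.isLt.le) (prefixMass ν t t.isLt.le) := by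
  have key : ∀ h : Fin t → 𝒳,
      prefixMass μ t t.isLt.le h * klFin (condLaw μ t h) (condLaw ν t h) =
        klFin (fun x => prefixMass μ (t + 1) t.isLt (Fin.snoc h x))
            (fun x => prefixMass ν (t + 1) t.isLt (Fin.snoc h x)) -
          prefixMass μ t t.isLt.le h *
            Real.log (prefixMass μ t t.isLt.le h / prefixMass ν t t.isLt.le h) := by
    intro h
    have := sum_mul_klFin_div_sum (p := fun x => prefixMass μ (t + 1) t.isLt (Fin.snoc h x))
      (q := fun x => prefixMass ν (t + 1) t.isLt (Fin.snoc h x))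
      (fun x => ENNReal.toReal_nonneg) (fun x => ENNReal.toReal_nonneg)
      fun x => prefixMass_eq_zero_of_absolutelyContinuous hμν t.isLt (Fin.snoc h x)
    simp only [sum_prefixMass_snoc] at this
    simpa only [funext (condLaw_eq_div μ t h), funext (condLaw_eq_div ν t h)]
  rw [Finset.sum_congr rfl fun h _ => key h, Finset.sum_sub_distrib]
  congr 1
  simp only [klFin]
  rw [← (Fin.snocEquiv fun _ => 𝒳).sum_comp, Fintype.sum_prod_type, Finset.sum_comm]
  rfl

theorem sum_prefixMass_mul_klFin_condLaw_eq_klFin [IsProbabilityMeasure μ]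
    [IsProbabilityMeasure ν] (hμν : μ ≪ ν) :
    ∑ t : Fin n, ∑ h : Fin t → 𝒳,
        prefixMass μ t t.isLt.le h * klFin (condLaw μ t h) (condLaw ν t h) =
      klFin (fun g => (μ {p | p.2 = g}).toReal) (fun g => (ν {p | p.2 = g}).toReal) := by
  -- extended by `0` beyond `n` so that it can be telescoped over `ℕ`
  let D : ℕ → ℝ := fun m =>
    if hm : m ≤ n then klFin (prefixMass μ m hm) (prefixMass ν m hm) else 0
  have hstep : ∀ t : Fin n, ∑ h : Fin t → 𝒳,
      prefixMass μ t t.isLt.le h * klFin (condLaw μ t h) (condLaw ν t h) = D (t + 1) - D t := by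
    intro t
    simp only [D, dif_pos (show (t : ℕ) + 1 ≤ n from t.isLt), dif_pos t.isLt.le]
    exact sum_prefixMass_mul_klFin_condLaw_eq_sub hμν t
  rw [Finset.sum_congr rfl fun t _ => hstep t,
    Fin.sum_univ_eq_sum_range (fun m => D (m + 1) - D m), Finset.sum_range_sub]
  simp [D, klFin, prefixMass_self, prefixMass_zero]

end Prefix

lemma absolutelyContinuous_of_forall_singleton {α : Type*} [MeasurableSpace α] [Countable α]
    {μ ν : Measure α} (h : ∀ x, ν {x} = 0 → μ {x} = 0) : μ ≪ ν := by
  refine Measure.AbsolutelyContinuous.mk fun s _ hs => ?_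
  rw [← Set.biUnion_of_singleton s]
  exact (measure_biUnion_null_iff s.to_countable).2 fun x hx =>
    h x (measure_mono_null (Set.singleton_subset_iff.2 hx) hs)

section Discrete

variable {α : Type*} [MeasurableSpace α] [MeasurableSingletonClass α]

lemma rnDeriv_mul_measure_singleton {μ ν : Measure α} [SigmaFinite μ] [SigmaFinite ν]
    (hμν : μ ≪ ν) (x : α) : μ.rnDeriv ν x * ν {x} = μ {x} := by
  rw [← lintegral_singleton, Measure.setLIntegral_rnDeriv hμν]

lemma toReal_klDiv_eq_klFin [Fintype α] {μ ν : Measure α} [IsProbabilityMeasure μ]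
    [IsProbabilityMeasure ν] (hμν : μ ≪ ν) :
    (klDiv μ ν).toReal = klFin (fun x => (μ {x}).toReal) (fun x => (ν {x}).toReal) := by
  rw [toReal_klDiv_of_measure_eq hμν (by simp), integral_fintype Integrable.of_finite, klFin]
  refine Finset.sum_congr rfl fun x _ => ?_
  rcases eq_or_ne (μ {x}) 0 with hμx | hμx
  · simp [Measure.real, hμx]
  have hνx : ν {x} ≠ 0 := fun h => hμx (hμν h)
  have hrn : (μ.rnDeriv ν x).toReal = (μ {x}).toReal / (ν {x}).toReal := by
    rw [eq_div_iff (ENNReal.toReal_ne_zero.2 ⟨hνx, measure_ne_top _ _⟩), ← ENNReal.toReal_mul,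
      rnDeriv_mul_measure_singleton hμν]
  simp [llr, Measure.real, hrn]

lemma klFin_comp_le_klFin [Fintype α] {β : Type*} [Fintype β] [MeasurableSpace β]
    [MeasurableSingletonClass β] {π π' : Measure α} [IsProbabilityMeasure π]
    [IsProbabilityMeasure π'] (hππ' : π ≪ π') (κ : Kernel α β) [IsMarkovKernel κ] :
    klFin (fun y => ((κ ∘ₘ π) {y}).toReal) (fun y => ((κ ∘ₘ π') {y}).toReal) ≤
      klFin (fun x => (π {x}).toReal) (fun x => (π' {x}).toReal) := by
  rw [← toReal_klDiv_eq_klFin hππ', ← toReal_klDiv_eq_klFin (hππ'.comp_right κ)]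
  exact ENNReal.toReal_mono (klDiv_ne_top hππ' Integrable.of_finite) (klDiv_comp_right_le π π' κ)

lemma eq_compProd_of_apply_singleton [Countable α] {β : Type*} [MeasurableSpace β] [Countable β]
    [MeasurableSingletonClass β] {ρ : Measure (α × β)} {π : Measure α} [SFinite π]
    {κ : Kernel α β} [IsSFiniteKernel κ] (h : ∀ p, ρ {p} = π {p.1} * κ p.1 {p.2}) :
    ρ = π ⊗ₘ κ := by
  refine Measure.ext_of_singleton fun p => ?_
  rw [h, ← Set.singleton_prod_singleton, Measure.compProd_apply_prod (measurableSet_singleton _)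
    (measurableSet_singleton _), lintegral_singleton, mul_comm]

end Discrete

theorem misspecified_prior_error_bound_general
    {Ψ 𝒳 : Type*} [Fintype Ψ] [Fintype 𝒳]
    [MeasurableSpace Ψ] [MeasurableSingletonClass Ψ]
    [MeasurableSpace 𝒳] [MeasurableSingletonClass 𝒳]
    (n : ℕ)
    (π π' : Measure Ψ) [IsProbabilityMeasure π] [IsProbabilityMeasure π']
    (hsupp : ∀ s : Ψ, 0 < π {s} → 0 < π' {s})
    (κ : Ψ → Measure (Fin n → 𝒳)) (hκ : ∀ s, IsProbabilityMeasure (κ s))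
    (μ ν : Measure (Ψ × (Fin n → 𝒳)))
    (hμ : ∀ p : Ψ × (Fin n → 𝒳), μ {p} = π {p.1} * κ p.1 {p.2})
    (hν : ∀ p : Ψ × (Fin n → 𝒳), ν {p} = π' {p.1} * κ p.1 {p.2}) :
    (∑ t : Fin n, ∑ h : Fin t.val → 𝒳,
        (μ {p | ∀ i : Fin t.val, p.2 (Fin.castLE t.isLt.le i) = h i}).toReal *
          klFin (condLaw μ t h) (condLaw ν t h)
      = klFin (fun g : Fin n → 𝒳 => (μ {p | p.2 = g}).toReal)
              (fun g : Fin n → 𝒳 => (ν {p | p.2 = g}).toReal)) ∧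
    klFin (fun g : Fin n → 𝒳 => (μ {p | p.2 = g}).toReal)
          (fun g : Fin n → 𝒳 => (ν {p | p.2 = g}).toReal)
      ≤ klFin (fun s => (π {s}).toReal) (fun s => (π' {s}).toReal) := by
  let K : Kernel Ψ (Fin n → 𝒳) := ⟨κ, Measurable.of_discrete⟩
  have : IsMarkovKernel K := ⟨hκ⟩
  have hππ' : π ≪ π' := absolutelyContinuous_of_forall_singleton fun s hs =>
    by_contra fun hπs => (hsupp s (pos_iff_ne_zero.2 hπs)).ne' hs
  obtain rfl : μ = π ⊗ₘ K := eq_compProd_of_apply_singleton hμ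
  obtain rfl : ν = π' ⊗ₘ K := eq_compProd_of_apply_singleton hν
  refine ⟨sum_prefixMass_mul_klFin_condLaw_eq_klFin (hππ'.compProd_left K), ?_⟩
  have := klFin_comp_le_klFin hππ' K
  simp only [← Measure.snd_compProd, Measure.snd_apply (measurableSet_singleton _)] at this
  exact this

/-- **Misspecified prior error bound** (paper, Theorem 8, via the chain rule and the data
processing inequality for KL divergence).  Let `π ≪ π̃` be priors on `Ψ`, `κ` a common
likelihood kernel, and `μ`, `ν` the induced joint laws on `Ψ × 𝒳^n`.  Then the cumulated
expected KL divergence between the `μ`- and `ν`-posterior-predictive distributions equals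
the KL divergence between the marginal laws of the data `X = (X_1,…,X_n)`, which is at
most `d_KL(π ‖ π̃)`. -/
theorem misspecified_prior_error_bound
    {Ψ 𝒳 : Type*} [Fintype Ψ] [Nonempty Ψ] [Fintype 𝒳] [Nonempty 𝒳]
    [MeasurableSpace Ψ] [MeasurableSingletonClass Ψ]
    [MeasurableSpace 𝒳] [MeasurableSingletonClass 𝒳]
    (n : ℕ) (hn : 1 ≤ n)
    (π π' : Measure Ψ) [IsProbabilityMeasure π] [IsProbabilityMeasure π']
    (hsupp : ∀ s : Ψ, 0 < π {s} → 0 < π' {s})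
    (κ : Ψ → Measure (Fin n → 𝒳)) (hκ : ∀ s, IsProbabilityMeasure (κ s))
    (μ ν : Measure (Ψ × (Fin n → 𝒳)))
    [IsProbabilityMeasure μ] [IsProbabilityMeasure ν]
    (hμ : ∀ p : Ψ × (Fin n → 𝒳), μ {p} = π {p.1} * κ p.1 {p.2})
    (hν : ∀ p : Ψ × (Fin n → 𝒳), ν {p} = π' {p.1} * κ p.1 {p.2}) :
    (∑ t : Fin n, ∑ h : Fin t.val → 𝒳,
        (μ {p | ∀ i : Fin t.val, p.2 (Fin.castLE t.isLt.le i) = h i}).toReal *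
          klFin (condLaw μ t h) (condLaw ν t h)
      = klFin (fun g : Fin n → 𝒳 => (μ {p | p.2 = g}).toReal)
              (fun g : Fin n → 𝒳 => (ν {p | p.2 = g}).toReal)) ∧
    klFin (fun g : Fin n → 𝒳 => (μ {p | p.2 = g}).toReal)
          (fun g : Fin n → 𝒳 => (ν {p | p.2 = g}).toReal)
      ≤ klFin (fun s => (π {s}).toReal) (fun s => (π' {s}).toReal) :=
  misspecified_prior_error_bound_general n π π' hsupp κ hκ μ ν hμ hν
end
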